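/- arXiv:2512.11809 — 2 statements merged into one kernel-verified Lean document; each statement's English description precedes it below -/
import Mathlib

section
/- Let X be an Archimedean vector lattice equipped with a convergence θ (satisfying axioms (1)–(4)), and let (x_α)_{α∈A} and (y_α)_{α∈A} be nets in X indexed by the same directed set. If x_α →uθ x and y_α →uθ y and λ ∈ ℝ, then λ x_α + y_α →uθ λ x + y. -/
open Filter

/-- A convergence structure `θ` on a vector lattice `X`, assigning to nets (maps from
nonempty directed preordered index types) limit points, and satisfying axioms (1)–(4):
(1) constant nets converge; (2) linearity, and `t • x →θ 0` as the scalar net `t → 0`;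
(3) domination: if `x_α →θ 0` and `|y_α| ≤ |x_α|` then `y_α →θ 0`;
(4) every subnet of a `θ`-convergent net `θ`-converges to the same limit. -/
structure VLConvergence (X : Type*) [Lattice X] [AddCommGroup X] [Module ℝ X] where
  conv : ∀ {ι : Type} [Preorder ι] [IsDirected ι (· ≤ ·)] [Nonempty ι], (ι → X) → X → Prop
  conv_const : ∀ {ι : Type} [Preorder ι] [IsDirected ι (· ≤ ·)] [Nonempty ι] (x : X),
    conv (fun _ : ι => x) x
  conv_add_smul : ∀ {ι : Type} [Preorder ι] [IsDirected ι (· ≤ ·)] [Nonempty ι]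
    (f g : ι → X) (x y : X) (l : ℝ),
    conv f x → conv g y → conv (fun α => f α + l • g α) (x + l • y)
  conv_smul_zero : ∀ {ι : Type} [Preorder ι] [IsDirected ι (· ≤ ·)] [Nonempty ι]
    (t : ι → ℝ) (x : X), Filter.Tendsto t Filter.atTop (nhds (0 : ℝ)) →
    conv (fun α => t α • x) (0 : X)
  conv_dominated : ∀ {ι : Type} [Preorder ι] [IsDirected ι (· ≤ ·)] [Nonempty ι]
    (f g : ι → X), conv f 0 → (∀ α, |g α| ≤ |f α|) → conv g 0
  conv_subnet : ∀ {ι κ : Type} [Preorder ι] [IsDirected ι (· ≤ ·)] [Nonempty ι]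
    [Preorder κ] [IsDirected κ (· ≤ ·)] [Nonempty κ]
    (f : ι → X) (x : X) (φ : κ → ι), conv f x →
    (∀ α₀ : ι, ∃ β₀ : κ, ∀ β, β₀ ≤ β → α₀ ≤ φ β) → conv (fun β => f (φ β)) x

/-- The Archimedean property for a vector lattice. -/
def IsArchimedeanVL (X : Type*) [Lattice X] [AddCommGroup X] : Prop :=
  ∀ x y : X, 0 ≤ x → (∀ n : ℕ, n • x ≤ y) → x = 0

variable {X : Type*} [Lattice X] [AddCommGroup X]
  [CovariantClass X X (· + ·) (· ≤ ·)] [Module ℝ X] [PosSMulMono ℝ X]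

/-- The unbounded modification `uθ` of a convergence `θ`:
`x_α →uθ x` iff `(x_α ⊔ b) ⊓ c →θ (x ⊔ b) ⊓ c` for all `b ≤ c`. -/
def VLConvergence.uconv (θ : VLConvergence X)
    {ι : Type} [Preorder ι] [IsDirected ι (· ≤ ·)] [Nonempty ι]
    (f : ι → X) (x : X) : Prop :=
  ∀ b c : X, b ≤ c → θ.conv (fun α => (f α ⊔ b) ⊓ c) ((x ⊔ b) ⊓ c)

/-! In terms of `uconv_iff`, `f →uθ x` says `|f α - x| ⊓ u →θ 0` for every `u ≥ 0`: one direction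
clamps to `[x - u, x + u]`, the other uses that clamping to `[b, c]` moves points by at most
`|f α - x| ⊓ (c - b)`. In this form linearity follows by domination, from
`|(f + g) - (x + y)| ⊓ u ≤ |f - x| ⊓ u + |g - y| ⊓ u` and
`|l • (f - x)| ⊓ u ≤ c • (|f - x| ⊓ c⁻¹ • u)` with `c = |l| + 1`. -/

section LatticeOrderedGroup

variable {G : Type*} [Lattice G] [AddCommGroup G] [AddLeftMono G]

lemma add_inf_le_inf_add_inf {p q u : G} (hp : 0 ≤ p) (hq : 0 ≤ q) (hu : 0 ≤ u) :
    (p + q) ⊓ u ≤ p ⊓ u + q ⊓ u := by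
  rw [add_inf, inf_add, inf_add]
  exact le_inf (le_inf inf_le_left (inf_le_right.trans (le_add_of_nonneg_right hq)))
    (le_inf (inf_le_right.trans (le_add_of_nonneg_left hp))
      (inf_le_right.trans (le_add_of_nonneg_left hu)))

lemma abs_inf_le_abs_sup_neg_inf (z u : G) : |z| ⊓ u ≤ |(z ⊔ -u) ⊓ u| := by
  let : DistribLattice G := AddCommGroup.toDistribLattice G
  have hneg : -((z ⊔ -u) ⊓ u) = (-z ⊓ u) ⊔ -u := by rw [neg_inf, neg_sup, neg_neg, sup_comm]
  rw [abs, inf_sup_right]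
  exact sup_le ((inf_le_inf_right u le_sup_left).trans (le_abs_self _))
    ((hneg ▸ le_sup_left).trans (neg_le_abs _))

lemma abs_sup_inf_sub_sup_inf_le {b c : G} (hbc : b ≤ c) (f x : G) :
    |(f ⊔ b) ⊓ c - (x ⊔ b) ⊓ c| ≤ |f - x| ⊓ (c - b) := by
  have mem : ∀ v : G, b ≤ (v ⊔ b) ⊓ c := fun v => le_inf le_sup_right hbc
  refine le_inf ((abs_inf_sub_inf_le_abs _ _ _).trans (abs_sup_sub_sup_le_abs _ _ _))
    (sup_le (sub_le_sub inf_le_right (mem x)) ?_)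
  rw [neg_sub]
  exact sub_le_sub inf_le_right (mem f)

end LatticeOrderedGroup

lemma abs_smul_le {R M : Type*} [Ring R] [LinearOrder R] [IsOrderedRing R] [Lattice M]
    [AddCommGroup M] [AddLeftMono M] [Module R M] [PosSMulMono R M] (a : R) (z : M) :
    |a • z| ≤ |a| • |z| := by
  have key : ∀ m : R, m • z ≤ |m| • |z| := by
    intro m
    rcases le_total 0 m with hm | hm
    · rw [abs_of_nonneg hm]
      exact smul_le_smul_of_nonneg_left (le_abs_self z) hm
    · rw [abs_of_nonpos hm, ← neg_smul_neg]
      exact smul_le_smul_of_nonneg_left (neg_le_abs z) (neg_nonneg.mpr hm)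
  refine sup_le (key a) ?_
  simpa only [neg_smul, abs_neg] using key (-a)

namespace VLConvergence

variable {E : Type*} [Lattice E] [AddCommGroup E] [Module ℝ E] (θ : VLConvergence E)
  {ι : Type} [Preorder ι] [IsDirected ι (· ≤ ·)] [Nonempty ι] {f g : ι → E} {x y : E}

lemma conv_add (hf : θ.conv f x) (hg : θ.conv g y) : θ.conv (fun α => f α + g α) (x + y) := by
  simpa using θ.conv_add_smul f g x y 1 hf hg

lemma conv_const_smul (c : ℝ) (hf : θ.conv f x) : θ.conv (fun α => c • f α) (c • x) := by
  simpa using θ.conv_add_smul _ f 0 x c (θ.conv_const 0) hf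

lemma conv_sub_const (hf : θ.conv f x) : θ.conv (fun α => f α - x) 0 := by
  simpa [sub_eq_add_neg] using θ.conv_add_smul f _ x x (-1) hf (θ.conv_const x)

lemma conv_add_const (hf : θ.conv f 0) (x : E) : θ.conv (fun α => f α + x) x := by
  simpa using θ.conv_add_smul f _ 0 x 1 hf (θ.conv_const x)

lemma conv_zero_of_nonneg_of_le [AddLeftMono E] (hf : θ.conv f 0) (hg : ∀ α, 0 ≤ g α)
    (hgf : ∀ α, g α ≤ f α) : θ.conv g 0 :=
  θ.conv_dominated f g hf fun α => by
    rw [abs_of_nonneg (hg α), abs_of_nonneg ((hg α).trans (hgf α))]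
    exact hgf α

lemma uconv_iff [AddLeftMono E] :
    θ.uconv f x ↔ ∀ u : E, 0 ≤ u → θ.conv (fun α => |f α - x| ⊓ u) 0 := by
  constructor
  · intro h u hu
    have hclamp := h (x - u) (x + u) ((sub_le_self x hu).trans (le_add_of_nonneg_right hu))
    rw [sup_eq_left.mpr (sub_le_self x hu), inf_eq_left.mpr (le_add_of_nonneg_right hu)]
      at hclamp
    refine θ.conv_dominated _ _ (θ.conv_sub_const hclamp) fun α => ?_
    have hshift : (f α ⊔ (x - u)) ⊓ (x + u) - x = ((f α - x) ⊔ -u) ⊓ u := by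
      rw [inf_sub, sup_sub, sub_sub_cancel_left, add_sub_cancel_left]
    rw [hshift, abs_of_nonneg (le_inf (abs_nonneg _) hu)]
    exact abs_inf_le_abs_sup_neg_inf _ _
  · intro h b c hbc
    have hdiff := θ.conv_dominated _ (fun α => (f α ⊔ b) ⊓ c - (x ⊔ b) ⊓ c)
      (h (c - b) (sub_nonneg.mpr hbc)) fun α =>
        (abs_sup_inf_sub_sup_inf_le hbc _ _).trans (le_abs_self _)
    simpa using θ.conv_add_const hdiff ((x ⊔ b) ⊓ c)

variable [AddLeftMono E]

lemma uconv_add (hf : θ.uconv f x) (hg : θ.uconv g y) :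
    θ.uconv (fun α => f α + g α) (x + y) := by
  rw [uconv_iff] at hf hg ⊢
  intro u hu
  refine θ.conv_zero_of_nonneg_of_le
    (by simpa only [add_zero] using θ.conv_add (hf u hu) (hg u hu))
    (fun α => le_inf (abs_nonneg _) hu) fun α => ?_
  calc |f α + g α - (x + y)| ⊓ u ≤ (|f α - x| + |g α - y|) ⊓ u := by
        rw [add_sub_add_comm]
        exact inf_le_inf_right u (abs_add_le _ _)
    _ ≤ |f α - x| ⊓ u + |g α - y| ⊓ u := add_inf_le_inf_add_inf (abs_nonneg _) (abs_nonneg _) hu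

lemma uconv_const_smul [PosSMulMono ℝ E] (l : ℝ) (hf : θ.uconv f x) :
    θ.uconv (fun α => l • f α) (l • x) := by
  rw [uconv_iff] at hf ⊢
  intro u hu
  -- `|l| + 1` rather than `|l|` keeps the scaling factor invertible when `l = 0`.
  set c : ℝ := |l| + 1
  have hc : 0 < c := by positivity
  refine θ.conv_zero_of_nonneg_of_le
    (by simpa only [smul_zero] using
      θ.conv_const_smul c (hf (c⁻¹ • u) (smul_nonneg (inv_nonneg.mpr hc.le) hu)))
    (fun α => le_inf (abs_nonneg _) hu) fun α => ?_
  calc |l • f α - l • x| ⊓ u ≤ (c • |f α - x|) ⊓ u := by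
        rw [← smul_sub]
        refine inf_le_inf_right u ((abs_smul_le l _).trans ?_)
        rw [add_smul, one_smul]
        exact le_add_of_nonneg_right (abs_nonneg _)
    _ = c • (|f α - x| ⊓ c⁻¹ • u) := by
        rw [show c • (|f α - x| ⊓ c⁻¹ • u) = c • |f α - x| ⊓ c • c⁻¹ • u from
          (OrderIso.smulRight hc).map_inf _ _, smul_inv_smul₀ hc.ne']

end VLConvergence

theorem stmt4_general (θ : VLConvergence X)
    {ι : Type} [Preorder ι] [IsDirected ι (· ≤ ·)] [Nonempty ι]
    (x y : ι → X) (a b : X) (l : ℝ)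
    (hx : θ.uconv x a) (hy : θ.uconv y b) :
    θ.uconv (fun α => l • x α + y α) (l • a + b) :=
  θ.uconv_add (θ.uconv_const_smul l hx) hy

theorem stmt4 (hArch : IsArchimedeanVL X) (θ : VLConvergence X)
    {ι : Type} [Preorder ι] [IsDirected ι (· ≤ ·)] [Nonempty ι]
    (x y : ι → X) (a b : X) (l : ℝ)
    (hx : θ.uconv x a) (hy : θ.uconv y b) :
    θ.uconv (fun α => l • x α + y α) (l • a + b) :=
  stmt4_general θ x y a b l hx hy
end

section
/- Let X be a Riesz space (vector lattice over ℝ), let x, e ∈ X with x ≥ 0 and e ≥ 0, and let n be a positive integer. Then n·((x − n·e)⁺ ∧ e) ≤ x. -/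
/-!
Put `u := (x - n • e)⁺ ⊓ e` and `t := x - n • u`. Since `u ≤ e`, we have `x - n • e ≤ t`, so
`u ≤ t⁺` and `t⁻ ≤ n • u ≤ n • t⁺`. But `t⁻` is disjoint from `t⁺`, hence from `n • t⁺`
(Riesz decomposition), which forces `t⁻ = 0`, i.e. `n • u ≤ x`.
-/

section LatticeOrderedAddCommGroup

variable {X : Type*} [Lattice X] [AddCommGroup X] [AddLeftMono X]

lemma inf_add_le_inf_add_inf {a b c : X} (ha : 0 ≤ a) (hb : 0 ≤ b) (hc : 0 ≤ c) :
    a ⊓ (b + c) ≤ a ⊓ b + a ⊓ c :=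
  calc a ⊓ (b + c) ≤ a ⊓ (a ⊓ b + c) := by
        rw [inf_add]
        exact le_inf inf_le_left (le_inf (inf_le_left.trans (le_add_of_nonneg_right hc))
          inf_le_right)
    _ ≤ (a ⊓ b + a) ⊓ (a ⊓ b + c) :=
        inf_le_inf_right _ (le_add_of_nonneg_left (le_inf ha hb))
    _ = a ⊓ b + a ⊓ c := (add_inf _ _ _).symm

lemma inf_nsmul_eq_zero_of_inf_eq_zero {a b : X} (ha : 0 ≤ a) (hb : 0 ≤ b) (hab : a ⊓ b = 0)
    (n : ℕ) : a ⊓ n • b = 0 := by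
  induction n with
  | zero => simpa using inf_eq_right.2 ha
  | succ k ih =>
    refine le_antisymm ?_ (le_inf ha (nsmul_nonneg hb _))
    calc a ⊓ (k + 1) • b = a ⊓ (k • b + b) := by rw [succ_nsmul]
      _ ≤ a ⊓ k • b + a ⊓ b := inf_add_le_inf_add_inf ha (nsmul_nonneg hb k) hb
      _ = 0 := by rw [ih, hab, add_zero]

lemma nonneg_of_negPart_le_nsmul_posPart {t : X} {n : ℕ} (h : t⁻ ≤ n • t⁺) : 0 ≤ t := by
  have hdisj : t⁻ ⊓ n • t⁺ = 0 := inf_nsmul_eq_zero_of_inf_eq_zero (negPart_nonneg t)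
    (posPart_nonneg t) (by rw [inf_comm, posPart_inf_negPart_eq_zero]) n
  have : t⁻ = 0 := by rwa [inf_eq_left.2 h] at hdisj
  rwa [← negPart_eq_zero]

end LatticeOrderedAddCommGroup

theorem stmt18_general {X : Type*} [Lattice X] [AddCommGroup X]
    [CovariantClass X X (· + ·) (· ≤ ·)]
    (x e : X) (hx : 0 ≤ x) (n : ℕ) :
    n • (((x - n • e) ⊔ 0) ⊓ e) ≤ x := by
  set u := ((x - n • e) ⊔ 0) ⊓ e
  set t := x - n • u
  have hu : u ≤ t⁺ := inf_le_left.trans <| posPart_mono <|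
    sub_le_sub_left (nsmul_le_nsmul_right inf_le_right n) x
  have ht : t⁻ ≤ n • t⁺ := by
    refine negPart_def t ▸ sup_le ?_ (nsmul_nonneg (posPart_nonneg t) n)
    calc -t = n • u - x := neg_sub _ _
      _ ≤ n • u := sub_le_self _ hx
      _ ≤ n • t⁺ := nsmul_le_nsmul_right hu n
  exact sub_nonneg.1 (nonneg_of_negPart_le_nsmul_posPart ht)

theorem stmt18 {X : Type*} [Lattice X] [AddCommGroup X]
    [CovariantClass X X (· + ·) (· ≤ ·)]
    (x e : X) (hx : 0 ≤ x) (he : 0 ≤ e) (n : ℕ) (hn : 0 < n) :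
    n • (((x - n • e) ⊔ 0) ⊓ e) ≤ x :=
  stmt18_general x e hx n
end
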